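/- arXiv:1809.06746 — 3 statements merged into one kernel-verified Lean document; each statement's English description precedes it below -/
import Mathlib

section
/- Suppose v : ℝ × ℝⁿ × ℝᵐ → ℝ is continuously differentiable and satisfies the dissipation constraints: (i) for every (t, ζ, k) ∈ [0,T] × Z × K and every δ ∈ [−1,1]ⁿ one has ∂ₜv(t, ζ, k) + ⟨∇_ζ v(t, ζ, k), f(t, ζ, k) + g(t, ζ, k) ∘ δ⟩ ≤ 0, and (ii) v(0, ζ, k) ≤ 0 for all (ζ, k) ∈ Z₀ × K. Suppose further that w : ℝ² × ℝᵐ → ℝ satisfies w(π(ζ), k) + v(t, ζ, k) − 1 ≥ 0 for all (t, ζ, k) ∈ [0,T] × Z × K. Then the forward reachable set X_FRS is contained in the 1-superlevel set of w, i.e., every (x, k) ∈ X_FRS satisfies w(x, k) ≥ 1. -/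
/-!
Along an admissible trajectory `ζ` with disturbance `d`, the value `s ↦ v (s, ζ s, k)` is
nonincreasing. Since `d` is only measurable, this function need not be differentiable; instead we
bound its right Dini derivative at each `t`. The increment over `[t, z]` is, up to `o(z - t)`, the
integral of `Dv(t, ζ t, k) (1, f + g ∘ d(s), 0)`, and freezing `f` and `g` at time `t` changes the
integrand by `o(1)` while turning it into a quantity that is `≤ 0` by the dissipation constraint at
`δ = d(s)`. Hence `v ≤ v (0, ζ 0, k) ≤ 0` along the trajectory, and `w ≥ 1 - v ≥ 1`.
-/

open Set MeasureTheory intervalIntegral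
open Filter Topology Asymptotics

/-- `f(t,ζ,k) + g(t,ζ,k) ∘ δ`, where `∘` is the componentwise (Hadamard) product. -/
def hadSum {n m : ℕ} (f g : ℝ × (Fin n → ℝ) × (Fin m → ℝ) → (Fin n → ℝ))
    (t : ℝ) (ζ : Fin n → ℝ) (k : Fin m → ℝ) (δ : Fin n → ℝ) : Fin n → ℝ :=
  fun i => f (t, ζ, k) i + g (t, ζ, k) i * δ i

/-- An admissible trajectory of the trajectory-tracking system for the parameter `k`. -/
def IsAdmissible {n m : ℕ} (T : ℝ) (Z Z₀ : Set (Fin n → ℝ))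
    (f g : ℝ × (Fin n → ℝ) × (Fin m → ℝ) → (Fin n → ℝ))
    (k : Fin m → ℝ) (ζ : ℝ → (Fin n → ℝ)) : Prop :=
  (∀ t ∈ Icc (0:ℝ) T, ζ t ∈ Z) ∧ ζ 0 ∈ Z₀ ∧
  ∃ d : ℝ → (Fin n → ℝ), Measurable d ∧ (∀ t i, d t i ∈ Icc (-1:ℝ) 1) ∧
    (∀ i, IntervalIntegrable (fun τ => hadSum f g τ (ζ τ) k (d τ) i) volume 0 T) ∧
    (∀ t ∈ Icc (0:ℝ) T, ∀ i, ζ t i = ζ 0 i + ∫ τ in (0:ℝ)..t, hadSum f g τ (ζ τ) k (d τ) i)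

theorem apply_le_apply_left_of_eventually_sub_le_mul {h : ℝ → ℝ} {a b : ℝ}
    (hh : ContinuousOn h (Icc a b))
    (hslope : ∀ t ∈ Ico a b, ∀ r > 0, ∀ᶠ z in 𝓝[>] t, h z - h t ≤ r * (z - t)) :
    ∀ x ∈ Icc a b, h x ≤ h a := by
  refine image_le_of_liminf_slope_right_le_deriv_boundary (B := fun _ ↦ h a) (B' := fun _ ↦ 0)
    hh le_rfl continuousOn_const (fun x _ ↦ hasDerivWithinAt_const x _ _) fun t ht r hr ↦ ?_
  refine ((hslope t ht (r / 2) (half_pos hr)).and self_mem_nhdsWithin).frequently.mono ?_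
  rintro z ⟨hz, htz : t < z⟩
  rw [slope_def_field, div_lt_iff₀ (sub_pos.2 htz)]
  nlinarith [mul_pos hr (sub_pos.2 htz)]

theorem Filter.Eventually.forall_Ioc_nhdsGT {p : ℝ → Prop} {t : ℝ} (h : ∀ᶠ s in 𝓝[>] t, p s) :
    ∀ᶠ z in 𝓝[>] t, ∀ s ∈ Ioc t z, p s := by
  obtain ⟨u, hu, hsub⟩ := mem_nhdsGT_iff_exists_Ioo_subset.1 h
  filter_upwards [Ioo_mem_nhdsGT hu] with z hz s hs using hsub ⟨hs.1, hs.2.trans_lt hz.2⟩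

theorem eventually_integral_le_mul_sub {ψ : ℝ → ℝ} {t r : ℝ}
    (hψ : ∀ᶠ z in 𝓝[>] t, IntervalIntegrable ψ volume t z) (hle : ∀ᶠ s in 𝓝[>] t, ψ s ≤ r) :
    ∀ᶠ z in 𝓝[>] t, ∫ s in t..z, ψ s ≤ r * (z - t) := by
  filter_upwards [hψ, hle.forall_Ioc_nhdsGT, self_mem_nhdsWithin] with z hint hz (htz : t < z)
  calc ∫ s in t..z, ψ s ≤ ∫ _ in t..z, r :=
        integral_mono_on_of_le_Ioo htz.le hint intervalIntegrable_const
          fun s hs ↦ hz s (Ioo_subset_Ioc_self hs)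
    _ = r * (z - t) := by rw [intervalIntegral.integral_const, smul_eq_mul, mul_comm]

section Curve

variable {W : Type*} [NormedAddCommGroup W] [NormedSpace ℝ W]

theorem isBigO_integral_nhdsGT {G : ℝ → W} {t C : ℝ} (hG : ∀ᶠ s in 𝓝[>] t, ‖G s‖ ≤ C) :
    (fun z ↦ ∫ s in t..z, G s) =O[𝓝[>] t] (fun z ↦ z - t) := by
  refine IsBigO.of_bound C ?_
  filter_upwards [hG.forall_Ioc_nhdsGT, self_mem_nhdsWithin] with z hz (htz : t < z)
  rw [Real.norm_eq_abs]
  exact intervalIntegral.norm_integral_le_of_norm_le_const (by rwa [uIoc_of_le htz.le])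

theorem eventually_sub_le_mul_of_hasFDerivAt [CompleteSpace W] {v : W → ℝ} {L : W →L[ℝ] ℝ}
    {γ G : ℝ → W} {t C : ℝ} (hv : HasFDerivAt v L (γ t))
    (hγ : ∀ᶠ z in 𝓝[>] t, γ z - γ t = ∫ s in t..z, G s)
    (hG : ∀ᶠ z in 𝓝[>] t, IntervalIntegrable G volume t z)
    (hG_le : ∀ᶠ s in 𝓝[>] t, ‖G s‖ ≤ C) (hLG : ∀ r > 0, ∀ᶠ s in 𝓝[>] t, L (G s) ≤ r) :
    ∀ r > 0, ∀ᶠ z in 𝓝[>] t, v (γ z) - v (γ t) ≤ r * (z - t) := by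
  have hγO : (fun z ↦ γ z - γ t) =O[𝓝[>] t] (fun z ↦ z - t) :=
    (isBigO_integral_nhdsGT hG_le).congr' (hγ.mono fun _ h ↦ h.symm) EventuallyEq.rfl
  have hγt : Tendsto γ (𝓝[>] t) (𝓝 (γ t)) := by
    have : Tendsto (fun z ↦ z - t) (𝓝[>] t) (𝓝 0) :=
      tendsto_sub_nhds_zero_iff.2 nhdsWithin_le_nhds
    exact tendsto_sub_nhds_zero_iff.1 (hγO.trans_tendsto this)
  have hrem : (fun z ↦ v (γ z) - v (γ t) - L (γ z - γ t)) =o[𝓝[>] t] (fun z ↦ z - t) :=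
    (hv.isLittleO.comp_tendsto hγt).trans_isBigO hγO
  intro r hr
  filter_upwards [hrem.def (half_pos hr), eventually_integral_le_mul_sub
    (hG.mono fun z h ↦ ⟨L.integrable_comp h.1, L.integrable_comp h.2⟩) (hLG (r / 2) (half_pos hr)),
    hγ, hG, self_mem_nhdsWithin] with z hz hint hγz hGz (htz : t < z)
  rw [hγz, ← L.intervalIntegral_comp_comm hGz, Real.norm_eq_abs, Real.norm_eq_abs,
    abs_of_pos (sub_pos.2 htz)] at hz
  linarith [le_abs_self (v (γ z) - v (γ t) - ∫ s in t..z, L (G s))]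

end Curve

theorem IntervalIntegrable.of_eval {ι : Type*} [Fintype ι] {F : ℝ → ι → ℝ} {a b : ℝ}
    (hF : ∀ i, IntervalIntegrable (fun τ ↦ F τ i) volume a b) :
    IntervalIntegrable F volume a b :=
  ⟨Integrable.of_eval fun i ↦ (hF i).1, Integrable.of_eval fun i ↦ (hF i).2⟩

theorem intervalIntegral.eval_integral {ι : Type*} [Fintype ι] {F : ℝ → ι → ℝ} {a b : ℝ}
    (hF : IntervalIntegrable F volume a b) (i : ι) :
    (∫ τ in a..b, F τ) i = ∫ τ in a..b, F τ i :=
  ((ContinuousLinearMap.proj (R := ℝ) (φ := fun _ : ι ↦ ℝ) i).intervalIntegral_comp_comm hF).symm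

section Primitive

variable {E : Type*} [NormedAddCommGroup E] [NormedSpace ℝ E] {ζ F : ℝ → E} {T : ℝ}

theorem continuousOn_of_eq_add_integral (hF : IntervalIntegrable F volume 0 T)
    (hζ : ∀ t ∈ Icc 0 T, ζ t = ζ 0 + ∫ τ in 0..t, F τ) : ContinuousOn ζ (Icc 0 T) :=
  (continuousOn_const.add ((continuousOn_primitive_interval' hF left_mem_uIcc).mono
    Icc_subset_uIcc)).congr hζ

theorem sub_eq_integral_of_eq_add_integral (hF : IntervalIntegrable F volume 0 T)
    (hζ : ∀ t ∈ Icc 0 T, ζ t = ζ 0 + ∫ τ in 0..t, F τ) {t z : ℝ} (ht : 0 ≤ t) (htz : t ≤ z)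
    (hz : z ≤ T) : ζ z - ζ t = ∫ τ in t..z, F τ := by
  have hint : ∀ c ∈ Icc 0 T, IntervalIntegrable F volume 0 c := fun c hc ↦
    hF.mono_set (uIcc_subset_uIcc_left (Icc_subset_uIcc hc))
  rw [hζ z ⟨ht.trans htz, hz⟩, hζ t ⟨ht, htz.trans hz⟩, add_sub_add_left_eq_sub,
    integral_interval_sub_left (hint z ⟨ht.trans htz, hz⟩) (hint t ⟨ht, htz.trans hz⟩)]

end Primitive

theorem intervalIntegrable_one_prodMk_zero {E P : Type*} [NormedAddCommGroup E]
    [NormedAddCommGroup P] {F : ℝ → E} {a b : ℝ} (hF : IntervalIntegrable F volume a b) :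
    IntervalIntegrable (fun s ↦ ((1 : ℝ), F s, (0 : P))) volume a b :=
  ⟨(integrable_const _).prodMk (hF.1.prodMk (integrable_const _)),
    (integrable_const _).prodMk (hF.2.prodMk (integrable_const _))⟩

theorem integral_one_prodMk_zero {E P : Type*} [NormedAddCommGroup E] [NormedSpace ℝ E]
    [CompleteSpace E] [NormedAddCommGroup P] [NormedSpace ℝ P] [CompleteSpace P] {F : ℝ → E}
    {a b : ℝ} (hF : IntervalIntegrable F volume a b) :
    ∫ s in a..b, ((1 : ℝ), F s, (0 : P)) = (b - a, ∫ s in a..b, F s, 0) := by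
  let J : E →L[ℝ] ℝ × E × P := (ContinuousLinearMap.inr ℝ ℝ (E × P)).comp
    (ContinuousLinearMap.inl ℝ E P)
  have hJ : (fun s ↦ ((1 : ℝ), F s, (0 : P))) = fun s ↦ ((1 : ℝ), (0 : E), (0 : P)) + J (F s) := by
    ext <;> simp [J]
  rw [hJ, integral_add intervalIntegrable_const
      ⟨J.integrable_comp hF.1, J.integrable_comp hF.2⟩,
    J.intervalIntegral_comp_comm hF, intervalIntegral.integral_const]
  simp [J]

theorem norm_add_mul_le_of_norm_le_one {R : Type*} [NonUnitalSeminormedRing R] {a b δ : R}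
    (hδ : ‖δ‖ ≤ 1) : ‖a + b * δ‖ ≤ ‖a‖ + ‖b‖ :=
  (norm_add_le _ _).trans <| add_le_add_right
    ((norm_mul_le _ _).trans (mul_le_of_le_one_right (norm_nonneg _) hδ)) _

theorem pi_norm_le_one_of_mem_Icc {ι : Type*} [Fintype ι] {δ : ι → ℝ}
    (hδ : ∀ i, δ i ∈ Icc (-1) 1) : ‖δ‖ ≤ 1 :=
  (pi_norm_le_iff_of_nonneg zero_le_one).2 fun i ↦ abs_le.2 (hδ i)

section hadSum

variable {n m : ℕ} {f g : ℝ × (Fin n → ℝ) × (Fin m → ℝ) → (Fin n → ℝ)} {k : Fin m → ℝ}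
  {δ : Fin n → ℝ}

theorem hadSum_eq (t : ℝ) (x : Fin n → ℝ) : hadSum f g t x k δ = f (t, x, k) + g (t, x, k) * δ :=
  rfl

theorem norm_hadSum_le (hδ : ∀ i, δ i ∈ Icc (-1) 1) (t : ℝ) (x : Fin n → ℝ) :
    ‖hadSum f g t x k δ‖ ≤ ‖f (t, x, k)‖ + ‖g (t, x, k)‖ :=
  norm_add_mul_le_of_norm_le_one (pi_norm_le_one_of_mem_Icc hδ)

theorem norm_hadSum_sub_hadSum_le (hδ : ∀ i, δ i ∈ Icc (-1) 1) (s t : ℝ) (x y : Fin n → ℝ) :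
    ‖hadSum f g s x k δ - hadSum f g t y k δ‖ ≤
      ‖f (s, x, k) - f (t, y, k)‖ + ‖g (s, x, k) - g (t, y, k)‖ := by
  rw [hadSum_eq, hadSum_eq, add_sub_add_comm, ← sub_mul]
  exact norm_add_mul_le_of_norm_le_one (pi_norm_le_one_of_mem_Icc hδ)

theorem eventually_fderiv_hadSum_le {P : Type*} [NormedAddCommGroup P] [NormedSpace ℝ P]
    {L : ℝ × (Fin n → ℝ) × P →L[ℝ] ℝ} {l : Filter ℝ} {ζ d : ℝ → Fin n → ℝ} {t : ℝ}
    (hf : Continuous f) (hg : Continuous g)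
    (hζ : Tendsto (fun s ↦ (s, ζ s, k)) l (𝓝 (t, ζ t, k))) (hd : ∀ s i, d s i ∈ Icc (-1) 1)
    (hL : ∀ δ : Fin n → ℝ, (∀ i, δ i ∈ Icc (-1) 1) → L (1, hadSum f g t (ζ t) k δ, 0) ≤ 0) :
    ∀ r > 0, ∀ᶠ s in l, L (1, hadSum f g s (ζ s) k (d s), 0) ≤ r := by
  have hlim : Tendsto (fun s ↦ ‖L‖ * (‖f (s, ζ s, k) - f (t, ζ t, k)‖ +
      ‖g (s, ζ s, k) - g (t, ζ t, k)‖)) l (𝓝 0) := by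
    simpa using (((tendsto_iff_norm_sub_tendsto_zero.1 ((hf.tendsto _).comp hζ)).add
      (tendsto_iff_norm_sub_tendsto_zero.1 ((hg.tendsto _).comp hζ))).const_mul ‖L‖)
  intro r hr
  filter_upwards [hlim.eventually (gt_mem_nhds hr)] with s hs
  set H := hadSum f g t (ζ t) k (d s)
  calc L (1, hadSum f g s (ζ s) k (d s), 0)
      = L (1, H, 0) + L (0, hadSum f g s (ζ s) k (d s) - H, 0) := by
        rw [← map_add]; simp
    _ ≤ 0 + ‖L‖ * ‖hadSum f g s (ζ s) k (d s) - H‖ := by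
        refine add_le_add (hL _ (hd s)) ((le_abs_self _).trans ?_)
        simpa using L.le_opNorm (0, hadSum f g s (ζ s) k (d s) - H, 0)
    _ ≤ r := by
        grw [zero_add, norm_hadSum_sub_hadSum_le (hd s)]; exact hs.le

end hadSum

theorem IsAdmissible.apply_le_apply_zero {n m : ℕ} {T : ℝ} {Z Z₀ : Set (Fin n → ℝ)}
    {f g : ℝ × (Fin n → ℝ) × (Fin m → ℝ) → (Fin n → ℝ)} {k : Fin m → ℝ} {ζ : ℝ → Fin n → ℝ}
    {v : ℝ × (Fin n → ℝ) × (Fin m → ℝ) → ℝ} (hζ : IsAdmissible T Z Z₀ f g k ζ)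
    (hf : Continuous f) (hg : Continuous g) (hv : Differentiable ℝ v)
    (hdiss : ∀ t ∈ Icc 0 T, ∀ x ∈ Z, ∀ δ : Fin n → ℝ, (∀ i, δ i ∈ Icc (-1) 1) →
      fderiv ℝ v (t, x, k) (1, hadSum f g t x k δ, 0) ≤ 0) :
    ∀ τ ∈ Icc 0 T, v (τ, ζ τ, k) ≤ v (0, ζ 0, k) := by
  obtain ⟨hZ, -, d, -, hd, hFi, hζFi⟩ := hζ
  set F : ℝ → Fin n → ℝ := fun τ ↦ hadSum f g τ (ζ τ) k (d τ)
  have hF : IntervalIntegrable F volume 0 T := .of_eval hFi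
  have hζF : ∀ t ∈ Icc 0 T, ζ t = ζ 0 + ∫ τ in 0..t, F τ := fun t ht ↦ funext fun i ↦ by
    rw [Pi.add_apply, intervalIntegral.eval_integral
      (hF.mono_set (uIcc_subset_uIcc_left (Icc_subset_uIcc ht))) i]
    exact hζFi t ht i
  have hγ : ContinuousOn (fun s ↦ (s, ζ s, k)) (Icc 0 T) :=
    continuousOn_id.prodMk ((continuousOn_of_eq_add_integral hF hζF).prodMk continuousOn_const)
  obtain ⟨C, hC⟩ : ∃ C, ∀ s ∈ Icc 0 T, ‖F s‖ ≤ C := by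
    obtain ⟨C, hC⟩ := isCompact_Icc.exists_bound_of_continuousOn
      ((hf.norm.add hg.norm).comp_continuousOn hγ)
    exact ⟨C, fun s hs ↦ (norm_hadSum_le (hd s) _ _).trans ((le_abs_self _).trans (hC s hs))⟩
  refine apply_le_apply_left_of_eventually_sub_le_mul (hv.continuous.comp_continuousOn hγ)
    fun t ht ↦ ?_
  have htT : Icc 0 T ∈ 𝓝[>] t :=
    mem_of_superset (Ioo_mem_nhdsGT ht.2) fun s hs ↦ ⟨ht.1.trans hs.1.le, hs.2.le⟩
  have hFtz : ∀ᶠ z in 𝓝[>] t, IntervalIntegrable F volume t z :=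
    mem_of_superset htT fun z hz ↦ hF.mono_set
      (uIcc_subset_uIcc (Icc_subset_uIcc ⟨ht.1, ht.2.le⟩) (Icc_subset_uIcc hz))
  refine eventually_sub_le_mul_of_hasFDerivAt (G := fun s ↦ (1, F s, 0)) (C := max 1 C)
    (hv _).hasFDerivAt ?_ (hFtz.mono fun z ↦ intervalIntegrable_one_prodMk_zero) ?_
    (eventually_fderiv_hadSum_le hf hg (((hγ t ⟨ht.1, ht.2.le⟩).mono_of_mem_nhdsWithin
      htT).tendsto) hd (hdiss t ⟨ht.1, ht.2.le⟩ _ (hZ t ⟨ht.1, ht.2.le⟩)))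
  · filter_upwards [hFtz, htT, self_mem_nhdsWithin] with z hFz hz (htz : t < z)
    rw [integral_one_prodMk_zero hFz,
      ← sub_eq_integral_of_eq_add_integral hF hζF ht.1 htz.le hz.2]
    simp
  · filter_upwards [htT] with s hs
    rw [Prod.norm_mk, Prod.norm_mk, norm_one, norm_zero]
    exact max_le_max le_rfl (max_le (hC s hs) ((norm_nonneg _).trans (hC s hs)))

theorem frs_subset_superlevel_w_general {n m : ℕ} {T : ℝ}
    (Z Z₀ : Set (Fin (n + 2) → ℝ)) (K : Set (Fin m → ℝ))
    (f g : ℝ × (Fin (n + 2) → ℝ) × (Fin m → ℝ) → (Fin (n + 2) → ℝ))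
    (hf : Continuous f) (hg : Continuous g)
    (v : ℝ × (Fin (n + 2) → ℝ) × (Fin m → ℝ) → ℝ) (hv : ContDiff ℝ 1 v)
    (hdiss : ∀ t ∈ Icc (0:ℝ) T, ∀ ζ ∈ Z, ∀ k ∈ K, ∀ δ : Fin (n + 2) → ℝ,
      (∀ i, δ i ∈ Icc (-1:ℝ) 1) →
      fderiv ℝ v (t, ζ, k) (1, hadSum f g t ζ k δ, 0) ≤ 0)
    (hinit : ∀ ζ₀ ∈ Z₀, ∀ k ∈ K, v (0, ζ₀, k) ≤ 0)
    (w : (ℝ × ℝ) × (Fin m → ℝ) → ℝ)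
    (hw : ∀ t ∈ Icc (0:ℝ) T, ∀ ζ ∈ Z, ∀ k ∈ K,
      0 ≤ w ((ζ 0, ζ 1), k) + v (t, ζ, k) - 1) :
    ∀ k ∈ K, ∀ ζ : ℝ → (Fin (n + 2) → ℝ), IsAdmissible T Z Z₀ f g k ζ →
      ∀ τ ∈ Icc (0:ℝ) T, 1 ≤ w ((ζ τ 0, ζ τ 1), k) := by
  intro k hk ζ hζ τ hτ
  have hvτ : v (τ, ζ τ, k) ≤ 0 :=
    (hζ.apply_le_apply_zero hf hg (hv.differentiable one_ne_zero)
      (fun t ht x hx ↦ hdiss t ht x hx k hk) τ hτ).trans (hinit _ hζ.2.1 k hk)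
  linarith [hw τ hτ (ζ τ) (hζ.1 τ hτ) k hk]

/-- Suppose `v` satisfies the dissipation constraints and `w(π(ζ),k) + v(t,ζ,k) - 1 ≥ 0`
on `[0,T] × Z × K`, where `π` projects onto the first two (spatial) coordinates.  Then the
forward reachable set is contained in the `1`-superlevel set of `w`: for every `k ∈ K`,
every admissible trajectory `ζ`, and every `τ ∈ [0,T]`, we have `w(π(ζ(τ)), k) ≥ 1`.
The state dimension is `n + 2` (encoding `n ≥ 2`). -/
theorem frs_subset_superlevel_w {n m : ℕ} {T : ℝ} (hT : 0 < T)
    (Z Z₀ : Set (Fin (n + 2) → ℝ)) (K : Set (Fin m → ℝ)) (hZ₀ : Z₀ ⊆ Z)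
    (f g : ℝ × (Fin (n + 2) → ℝ) × (Fin m → ℝ) → (Fin (n + 2) → ℝ))
    (hf : Continuous f) (hg : Continuous g)
    (v : ℝ × (Fin (n + 2) → ℝ) × (Fin m → ℝ) → ℝ) (hv : ContDiff ℝ 1 v)
    (hdiss : ∀ t ∈ Icc (0:ℝ) T, ∀ ζ ∈ Z, ∀ k ∈ K, ∀ δ : Fin (n + 2) → ℝ,
      (∀ i, δ i ∈ Icc (-1:ℝ) 1) →
      fderiv ℝ v (t, ζ, k) (1, hadSum f g t ζ k δ, 0) ≤ 0)
    (hinit : ∀ ζ₀ ∈ Z₀, ∀ k ∈ K, v (0, ζ₀, k) ≤ 0)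
    (w : (ℝ × ℝ) × (Fin m → ℝ) → ℝ)
    (hw : ∀ t ∈ Icc (0:ℝ) T, ∀ ζ ∈ Z, ∀ k ∈ K,
      0 ≤ w ((ζ 0, ζ 1), k) + v (t, ζ, k) - 1) :
    ∀ k ∈ K, ∀ ζ : ℝ → (Fin (n + 2) → ℝ), IsAdmissible T Z Z₀ f g k ζ →
      ∀ τ ∈ Icc (0:ℝ) T, 1 ≤ w ((ζ τ 0, ζ τ 1), k) :=
  frs_subset_superlevel_w_general Z Z₀ K f g hf hg v hv hdiss hinit w hw
end

section
/- Let T > 0, n ∈ ℕ, g : [0,T] → ℝⁿ be Lebesgue-measurable, and let e : [0,T] → ℝⁿ be absolutely continuous with e(0) = 0 such that for almost every t ∈ [0,T] and every i ∈ {1, …, n}, |eᵢ'(t)| ≤ |gᵢ(t)|. Then there exists a Lebesgue-measurable d : [0,T] → [−1,1]ⁿ such that e(t) = ∫₀ᵗ g(τ) ∘ d(τ) dτ for every t ∈ [0,T], where ∘ denotes the componentwise (Hadamard) product. -/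
open Set MeasureTheory intervalIntegral

/-- Measurable-disturbance selection: if `e : [0,T] → ℝⁿ` is absolutely continuous with
`e 0 = 0` (encoded by the integral representation `e t = ∫₀ᵗ e'` with `e'` measurable and
interval-integrable), and a.e. on `[0,T]` one has `|eᵢ'(t)| ≤ |gᵢ(t)|` for every `i`, then
there is a measurable `d : [0,T] → [-1,1]ⁿ` with `e t = ∫₀ᵗ g(τ) ∘ d(τ) dτ` for all
`t ∈ [0,T]`, where `∘` is the componentwise (Hadamard) product. -/
theorem measurable_disturbance_selection (T : ℝ) (hT : 0 < T) (n : ℕ)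
    (g : ℝ → Fin n → ℝ) (hg : Measurable g)
    (e e' : ℝ → Fin n → ℝ)
    (he'meas : Measurable e')
    (he'int : ∀ i, IntervalIntegrable (fun t => e' t i) volume 0 T)
    (hrep : ∀ t ∈ Icc (0:ℝ) T, ∀ i, e t i = ∫ τ in (0:ℝ)..t, e' τ i)
    (he0 : e 0 = 0)
    (hbound : ∀ᵐ t ∂(volume.restrict (Icc (0:ℝ) T)), ∀ i, |e' t i| ≤ |g t i|) :
    ∃ d : ℝ → Fin n → ℝ, Measurable d ∧ (∀ t i, d t i ∈ Icc (-1:ℝ) 1) ∧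
      ∀ t ∈ Icc (0:ℝ) T, ∀ i, e t i = ∫ τ in (0:ℝ)..t, g τ i * d τ i := by
  set d : ℝ → Fin n → ℝ := fun t i =>
    max (-1) (min 1 (if g t i = 0 then 0 else e' t i / g t i)) with hd
  refine ⟨d, ?_, ?_, ?_⟩
  · apply measurable_pi_lambda
    intro i
    apply Measurable.max measurable_const
    apply Measurable.min measurable_const
    apply Measurable.ite
    · exact measurableSet_eq_fun ((hg.eval : Measurable fun t => g t i)) measurable_const
    · exact measurable_const
    · exact (he'meas.eval : Measurable fun t => e' t i).div hg.eval
  · intro t i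
    constructor
    · exact le_max_left _ _
    · simp [hd, max_le_iff, min_le_iff]
  · intro t ht i
    rw [hrep t ht i]
    apply intervalIntegral.integral_congr_ae
    have hsub : Set.uIoc (0:ℝ) t ⊆ Icc (0:ℝ) T := by
      rw [Set.uIoc_of_le ht.1]
      exact fun x hx => ⟨le_of_lt hx.1, hx.2.trans ht.2⟩
    have h2 : ∀ᵐ τ ∂(volume.restrict (Set.uIoc (0:ℝ) t)), ∀ i, |e' τ i| ≤ |g τ i| :=
      ae_restrict_of_ae_restrict_of_subset hsub hbound
    rw [MeasureTheory.ae_restrict_iff' measurableSet_uIoc] at h2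
    filter_upwards [h2] with τ hτ hmem
    have hb := hτ hmem i
    by_cases hgz : g τ i = 0
    · have : e' τ i = 0 := by
        have := abs_nonneg (e' τ i)
        rw [hgz, abs_zero] at hb
        linarith [abs_nonneg (e' τ i), le_antisymm hb (abs_nonneg (e' τ i)), abs_eq_zero.mp (le_antisymm hb (abs_nonneg (e' τ i)))]
      simp [hd, hgz, this]
    · have hq : |e' τ i / g τ i| ≤ 1 := by
        rw [abs_div]
        rw [div_le_one (abs_pos.mpr hgz)]
        exact hb
      have h1 : min 1 (if g τ i = 0 then 0 else e' τ i / g τ i) = e' τ i / g τ i := by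
        rw [if_neg hgz, min_eq_right (abs_le.mp hq).2]
      have h3 : d τ i = e' τ i / g τ i := by
        rw [hd]
        simp only [h1]
        exact max_eq_right (abs_le.mp hq).1
      rw [h3, mul_div_cancel₀ _ hgz]
end

section
/- Let X₀ ⊆ ℝ² be compact and convex with nonempty interior and width W, and let I be a line segment of length L > 0 whose line ℓ_I is disjoint from X₀, with X₀ contained in the interior of P_I. If W < L, then there exist T > 0 and a transformation family {R_t}_{t∈[0,T]} that passes X₀ fully through I. -/
open Set Real RealInnerProductSpace

noncomputable section

abbrev Pt := EuclideanSpace ℝ (Fin 2)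

/-- The closed segment `[a, b]`. -/
def seg (a b : Pt) : Set Pt := segment ℝ a b

/-- The line through `a` and `b`. -/
def lineThrough (a b : Pt) : Set Pt := {p : Pt | ∃ s : ℝ, p = a + s • (b - a)}

/-- Rotation of the plane by angle `α` about the origin. -/
def rot (α : ℝ) (p : Pt) : Pt :=
  WithLp.toLp 2 ![Real.cos α * p 0 - Real.sin α * p 1, Real.sin α * p 0 + Real.cos α * p 1]

/-- A vector normal to the segment from `a` to `b`. -/
def nvec (a b : Pt) : Pt := WithLp.toLp 2 ![-(b 1 - a 1), b 0 - a 0]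

/-- The closed half-plane bounded by the line through `a` and `b` containing `c`. -/
def halfPlane (a b c : Pt) : Set Pt :=
  if 0 ≤ ⟪nvec a b, c - a⟫ then {p : Pt | 0 ≤ ⟪nvec a b, p - a⟫}
  else {p : Pt | ⟪nvec a b, p - a⟫ ≤ 0}

/-- Orthogonal projection of `p` onto the line through `a` and `b`. -/
def lineProj (a b p : Pt) : Pt :=
  a + (⟪p - a, b - a⟫ / ⟪b - a, b - a⟫) • (b - a)

/-- A continuous family of direct planar isometries indexed by `t ∈ [0, T]`,
each of the form `p ↦ rot (θ t) (p - c) + s t + c`. -/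
structure TransFam (c : Pt) (T : ℝ) where
  θ : ℝ → ℝ
  trans : ℝ → Pt
  contθ : ContinuousOn θ (Icc 0 T)
  contTrans : ContinuousOn trans (Icc 0 T)

/-- The isometry at time `t`. -/
def TransFam.R {c : Pt} {T : ℝ} (F : TransFam c T) (t : ℝ) (p : Pt) : Pt :=
  rot (F.θ t) (p - c) + F.trans t + c

/-- The family `F` attempts to pass `X₀` through the segment with endpoints `e₁, e₂`,
where `c ∈ X₀` is the reference point (so `halfPlane e₁ e₂ c` is the half-plane containing
`X₀`). -/
def AttemptsPass {c : Pt} {T : ℝ} (F : TransFam c T) (X₀ : Set Pt) (e₁ e₂ : Pt) : Prop :=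
  ∃ t₀ t₁ : ℝ, 0 < t₀ ∧ t₀ ≤ t₁ ∧ t₁ ≤ T ∧
    (∀ t ∈ Icc t₀ t₁, (F.R t '' X₀ ∩ (seg e₁ e₂ \ {e₁, e₂})).Nonempty) ∧
    (∀ t ∈ Ico 0 t₀, F.R t '' X₀ ⊆ halfPlane e₁ e₂ c) ∧
    (∀ t ∈ Ico 0 T, e₁ ∉ F.R t '' X₀ ∧ e₂ ∉ F.R t '' X₀)

/-- Penetration distance of `X₀` through the segment `[e₁, e₂]` under the family `F`:
the supremum of distances to the line `ℓ_I` over points of `R_T(X₀)` outside the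
half-plane `P_I` whose orthogonal projection onto `ℓ_I` lies in `I` (`0` if empty,
via `Real.sSup_empty`). -/
def penetration {c : Pt} {T : ℝ} (F : TransFam c T) (X₀ : Set Pt) (e₁ e₂ : Pt) : ℝ :=
  sSup {d : ℝ | ∃ p, p ∈ F.R T '' X₀ ∧ p ∉ halfPlane e₁ e₂ c ∧
      lineProj e₁ e₂ p ∈ seg e₁ e₂ ∧ d = Metric.infDist p (lineThrough e₁ e₂)}

/-- The width of a planar set: the infimum over unit directions `u` of
`sup ⟪x,u⟫ - inf ⟪x,u⟫` over `x ∈ K`. -/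
def width (K : Set Pt) : ℝ :=
  sInf {w : ℝ | ∃ u : Pt, ‖u‖ = 1 ∧
    w = sSup ((fun x => ⟪x, u⟫) '' K) - sInf ((fun x => ⟪x, u⟫) '' K)}

/-- Penetration of `X₀` into the circle `C` through the chord `[e₁, e₂]` under `F`. -/
def penetrationCircle {c : Pt} {T : ℝ} (F : TransFam c T) (X₀ : Set Pt) (C : Set Pt)
    (e₁ e₂ : Pt) : ℝ :=
  sSup {d : ℝ | ∃ p₁ p₂, p₁ ∈ F.R T '' X₀ ∩ C ∧ p₂ ∈ F.R T '' X₀ \ halfPlane e₁ e₂ c ∧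
      d = ‖p₁ - p₂‖}


/-- The set of penetration distances achievable by passing `X₀` through some segment of
length `L` whose line is disjoint from `X₀` and with `X₀` in the interior of the
corresponding half-plane, under some transformation family attempting the pass. -/
def penSet (X₀ : Set Pt) (c : Pt) (L : ℝ) : Set ℝ :=
  {p : ℝ | ∃ e₁ e₂ : Pt, e₁ ≠ e₂ ∧ ‖e₂ - e₁‖ = L ∧
    lineThrough e₁ e₂ ∩ X₀ = ∅ ∧ X₀ ⊆ interior (halfPlane e₁ e₂ c) ∧
    ∃ T : ℝ, 0 < T ∧ ∃ F : TransFam c T, AttemptsPass F X₀ e₁ e₂ ∧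
      p = penetration F X₀ e₁ e₂}

/-- The axis-aligned rectangle `[0, L] × [0, W]`. -/
def rect (L W : ℝ) : Set Pt := {p : Pt | p 0 ∈ Icc 0 L ∧ p 1 ∈ Icc 0 W}

open Filter Topology

/-! Let `ν` be the unit normal of `ℓ_I` pointing into `P_I`. Since the width of `X₀` is less than
the length `L` of `I`, `X₀` lies in a strip of width less than `L` orthogonal to some unit vector
`u`. Lift `X₀` along `ν` until it can be turned freely about `c` without reaching `ℓ_I`, turn it so
that `u` points along `I` and the strip lies over the open segment, then translate it along `-ν`
past `ℓ_I`. Its lowest point meets `ℓ_I` inside `I`, and from then on every point of the moving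
copy stays over the open segment, so the endpoints are never hit. -/

lemma Pt.ext {p q : Pt} (h0 : p 0 = q 0) (h1 : p 1 = q 1) : p = q := by
  ext i; fin_cases i <;> assumption

lemma Pt.inner_eq (x y : Pt) : ⟪x, y⟫ = x 0 * y 0 + x 1 * y 1 := by
  simp only [PiLp.inner_apply, RCLike.inner_apply, ringHom_apply, Fin.sum_univ_two]; ring

lemma rot_apply_zero (α : ℝ) (p : Pt) : rot α p 0 = cos α * p 0 - sin α * p 1 := rfl

lemma rot_apply_one (α : ℝ) (p : Pt) : rot α p 1 = sin α * p 0 + cos α * p 1 := rfl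

lemma rot_zero (p : Pt) : rot 0 p = p := by
  apply Pt.ext <;> simp [rot_apply_zero, rot_apply_one]

lemma inner_rot_rot (α : ℝ) (x y : Pt) : ⟪rot α x, rot α y⟫ = ⟪x, y⟫ := by
  simp only [Pt.inner_eq, rot_apply_zero, rot_apply_one]
  linear_combination (x 0 * y 0 + x 1 * y 1) * sin_sq_add_cos_sq α

lemma norm_rot (α : ℝ) (x : Pt) : ‖rot α x‖ = ‖x‖ := by
  rw [norm_eq_sqrt_real_inner, inner_rot_rot, ← norm_eq_sqrt_real_inner]

lemma continuous_rot (α : ℝ) : Continuous (rot α) := by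
  unfold rot; fun_prop

lemma exists_cos_sin_eq {C S : ℝ} (h : C ^ 2 + S ^ 2 = 1) : ∃ α, cos α = C ∧ sin α = S := by
  have hz : ‖(⟨C, S⟩ : ℂ)‖ = 1 := by
    rw [Complex.norm_def, Complex.normSq_mk, ← sq, ← sq, h, Real.sqrt_one]
  refine ⟨Complex.arg ⟨C, S⟩, ?_, ?_⟩
  · rw [Complex.cos_arg (norm_ne_zero_iff.mp (hz ▸ one_ne_zero)), hz, div_one]
  · rw [Complex.sin_arg, hz, div_one]

lemma exists_rot_eq {u d : Pt} (hu : ‖u‖ = 1) (hd : ‖d‖ = 1) : ∃ α, rot α u = d := by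
  have hu2 : u 0 ^ 2 + u 1 ^ 2 = 1 := by
    have := real_inner_self_eq_norm_sq u
    rw [hu, Pt.inner_eq] at this; linarith
  have hd2 : d 0 ^ 2 + d 1 ^ 2 = 1 := by
    have := real_inner_self_eq_norm_sq d
    rw [hd, Pt.inner_eq] at this; linarith
  obtain ⟨α, hcos, hsin⟩ :=
    exists_cos_sin_eq (C := u 0 * d 0 + u 1 * d 1) (S := u 0 * d 1 - u 1 * d 0)
      (by linear_combination (d 0 ^ 2 + d 1 ^ 2) * hu2 + hd2)
  refine ⟨α, Pt.ext ?_ ?_⟩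
  · rw [rot_apply_zero, hcos, hsin]; linear_combination d 0 * hu2
  · rw [rot_apply_one, hcos, hsin]; linear_combination d 1 * hu2

lemma inner_self_smul_eq_of_inner_eq_zero {ν x y : Pt} (hν : ν ≠ 0) (hx : ⟪ν, x⟫ = 0)
    (hy : ⟪ν, y⟫ = 0) : ⟪y, y⟫ • x = ⟪y, x⟫ • y := by
  rw [Pt.inner_eq] at hx hy
  have hdet : x 0 * y 1 - x 1 * y 0 = 0 := by
    by_cases h0 : ν 0 = 0
    · have h1 : ν 1 ≠ 0 := fun h1 => hν (Pt.ext (by simpa using h0) (by simpa using h1))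
      refine (mul_eq_zero.mp ?_).resolve_left h1
      linear_combination x 0 * hy - y 0 * hx
    · refine (mul_eq_zero.mp ?_).resolve_left h0
      linear_combination y 1 * hx - x 1 * hy
  apply Pt.ext <;> simp only [PiLp.smul_apply, smul_eq_mul, Pt.inner_eq]
  · linear_combination y 1 * hdet
  · linear_combination -(y 0 * hdet)

lemma inner_nvec_sub (a b : Pt) : ⟪nvec a b, b - a⟫ = 0 := by
  simp only [nvec, Pt.inner_eq, Matrix.cons_val_zero, Matrix.cons_val_one, PiLp.sub_apply]; ring

lemma norm_nvec (a b : Pt) : ‖nvec a b‖ = ‖b - a‖ := by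
  simp only [nvec, EuclideanSpace.norm_eq, norm_eq_abs, sq_abs, Fin.sum_univ_two,
    Matrix.cons_val_zero, Matrix.cons_val_one, PiLp.sub_apply, neg_sq]
  rw [add_comm]

lemma exists_unit_normal_halfPlane {e₁ e₂ : Pt} (he : e₁ ≠ e₂) (c : Pt) :
    ∃ ν : Pt, ‖ν‖ = 1 ∧ ⟪ν, e₂ - e₁⟫ = 0 ∧ halfPlane e₁ e₂ c = {p | 0 ≤ ⟪ν, p - e₁⟫} := by
  unfold halfPlane
  set n := nvec e₁ e₂
  have hn : 0 < ‖n‖⁻¹ := by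
    rw [inv_pos, norm_nvec]; exact norm_pos_iff.mpr (sub_ne_zero.mpr he.symm)
  have hn1 : ‖‖n‖⁻¹ • n‖ = 1 := by
    rw [norm_smul, norm_inv, norm_norm, inv_mul_cancel₀ (inv_pos.mp hn).ne']
  split_ifs
  · refine ⟨‖n‖⁻¹ • n, hn1, by rw [inner_smul_left, inner_nvec_sub, mul_zero], ?_⟩
    ext p
    simp only [mem_ofPred_eq, real_inner_smul_left, mul_nonneg_iff_of_pos_left hn]
  · refine ⟨-(‖n‖⁻¹ • n), by rw [norm_neg, hn1], by
      rw [inner_neg_left, inner_smul_left, inner_nvec_sub, mul_zero, neg_zero], ?_⟩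
    ext p
    rw [mem_ofPred_eq, mem_ofPred_eq, inner_neg_left, real_inner_smul_left, ← mul_neg,
      mul_nonneg_iff_of_pos_left hn, neg_nonneg]

lemma inner_sub_pos_of_mem_interior {ν a p : Pt} (hν : ν ≠ 0)
    (hp : p ∈ interior {q : Pt | 0 ≤ ⟪ν, q - a⟫}) : 0 < ⟪ν, p - a⟫ := by
  have hcurve : Tendsto (fun s : ℝ => p - s • ν) (𝓝[>] 0) (𝓝 p) := by
    have : Continuous (fun s : ℝ => p - s • ν) := by fun_prop
    simpa using (this.tendsto 0).mono_left nhdsWithin_le_nhds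
  obtain ⟨s, hs, hs0⟩ :=
    ((hcurve.eventually (mem_interior_iff_mem_nhds.mp hp)).and self_mem_nhdsWithin).exists
  have hs' : 0 ≤ ⟪ν, p - a⟫ - s * ⟪ν, ν⟫ := by
    simpa [sub_right_comm, inner_sub_right, inner_smul_right] using hs
  linarith [mul_pos (show (0 : ℝ) < s from hs0) (real_inner_self_pos.mpr hν)]

lemma mem_seg_sdiff_of_inner_eq_zero {e₁ e₂ ν q : Pt} (hν : ν ≠ 0) (hνe : ⟪ν, e₂ - e₁⟫ = 0)
    (hq : ⟪ν, q - e₁⟫ = 0) (ha : ⟪e₂ - e₁, q - e₁⟫ ∈ Ioo 0 (‖e₂ - e₁‖ ^ 2)) :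
    q ∈ seg e₁ e₂ \ {e₁, e₂} := by
  obtain ⟨h0, h1⟩ := ha
  rw [← real_inner_self_eq_norm_sq] at h1
  have hΔ : 0 < ⟪e₂ - e₁, e₂ - e₁⟫ := h0.trans h1
  have hq' : q = e₁ + (⟪e₂ - e₁, q - e₁⟫ / ⟪e₂ - e₁, e₂ - e₁⟫) • (e₂ - e₁) := by
    rw [div_eq_inv_mul, ← smul_smul, ← inner_self_smul_eq_of_inner_eq_zero hν hq hνe, smul_smul,
      inv_mul_cancel₀ hΔ.ne', one_smul, add_sub_cancel]
  refine ⟨?_, ?_⟩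
  · rw [seg, segment_eq_image']
    exact ⟨_, ⟨(div_pos h0 hΔ).le, (div_lt_one hΔ).mpr h1 |>.le⟩, hq'.symm⟩
  · rintro (rfl | rfl)
    · simp at h0
    · exact h1.ne rfl

lemma exists_abs_inner_sub_lt_of_width_lt {K : Set Pt} (hK : IsCompact K) {L : ℝ}
    (hW : width K < L) :
    ∃ u : Pt, ‖u‖ = 1 ∧ ∃ m : ℝ, ∀ p ∈ K, |⟪u, p⟫ - m| < L / 2 := by
  obtain ⟨_, ⟨u, hu, rfl⟩, hwL⟩ := exists_lt_of_csInf_lt (by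
    exact ⟨_, EuclideanSpace.single 0 1, (PiLp.norm_single _ _ _ _).trans norm_one, rfl⟩) hW
  have hbdd := hK.image (by fun_prop : Continuous fun x : Pt => ⟪x, u⟫)
  refine ⟨u, hu, (sSup ((fun x => ⟪x, u⟫) '' K) + sInf ((fun x => ⟪x, u⟫) '' K)) / 2,
    fun p hp => abs_sub_lt_iff.mpr ?_⟩
  have hsup := le_csSup hbdd.bddAbove (mem_image_of_mem _ hp)
  have hinf := csInf_le hbdd.bddBelow (mem_image_of_mem _ hp)
  rw [real_inner_comm]
  constructor <;> linarith

namespace TransFam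

variable {c : Pt} {T : ℝ}

lemma continuous_R (F : TransFam c T) (t : ℝ) : Continuous (F.R t) :=
  ((continuous_rot _).comp (continuous_id.sub continuous_const)).add continuous_const
    |>.add continuous_const

theorem passes_of_lowering (F : TransFam c T) {X₀ : Set Pt} (hX₀ : IsCompact X₀)
    (hne : X₀.Nonempty) {e₁ e₂ ν : Pt} (hν : ‖ν‖ = 1) (hνe : ⟪ν, e₂ - e₁⟫ = 0)
    (hP : halfPlane e₁ e₂ c = {p | 0 ≤ ⟪ν, p - e₁⟫}) {t₂ : ℝ} (ht₂ : 0 ≤ t₂)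
    (hlift : ∀ t ∈ Icc 0 t₂, ∀ p ∈ X₀, 0 < ⟪ν, F.R t p - e₁⟫)
    (hlower : ∀ t ∈ Icc t₂ T, ∀ p, F.R t p = F.R t₂ p - (t - t₂) • ν)
    (hstrip : ∀ p ∈ X₀, ⟪e₂ - e₁, F.R t₂ p - e₁⟫ ∈ Ioo 0 (‖e₂ - e₁‖ ^ 2))
    (hdeep : ∀ p ∈ X₀, ⟪ν, F.R t₂ p - e₁⟫ < T - t₂) :
    AttemptsPass F X₀ e₁ e₂ ∧ F.R T '' X₀ ⊆ (halfPlane e₁ e₂ c)ᶜ := by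
  have hν0 : ν ≠ 0 := norm_ne_zero_iff.mp (hν ▸ one_ne_zero)
  have hνν : ⟪ν, ν⟫ = 1 := by rw [real_inner_self_eq_norm_sq, hν, one_pow]
  have hheight : ∀ t ∈ Icc t₂ T, ∀ p,
      ⟪ν, F.R t p - e₁⟫ = ⟪ν, F.R t₂ p - e₁⟫ - (t - t₂) := fun t ht p => by
    rw [hlower t ht, sub_right_comm, inner_sub_right, real_inner_smul_right, hνν, mul_one]
  have habscissa : ∀ t ∈ Icc t₂ T, ∀ p,
      ⟪e₂ - e₁, F.R t p - e₁⟫ = ⟪e₂ - e₁, F.R t₂ p - e₁⟫ := fun t ht p => by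
    rw [hlower t ht, sub_right_comm, inner_sub_right, real_inner_smul_right,
      real_inner_comm ν, hνe, mul_zero, sub_zero]
  -- The first contact happens at the lowest point of the lifted and turned copy.
  obtain ⟨p₀, hp₀, hmin⟩ := hX₀.exists_isMinOn hne
    ((continuous_const.inner ((F.continuous_R t₂).sub continuous_const)).continuousOn :
      ContinuousOn (fun p => ⟪ν, F.R t₂ p - e₁⟫) X₀)
  set A := ⟪ν, F.R t₂ p₀ - e₁⟫
  have hA : 0 < A := hlift t₂ ⟨ht₂, le_rfl⟩ p₀ hp₀
  have hAT : t₂ + A ≤ T := by linarith [hdeep p₀ hp₀]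
  have hinside : ∀ t ∈ Ico 0 (t₂ + A), ∀ p ∈ X₀, 0 < ⟪ν, F.R t p - e₁⟫ := by
    intro t ht p hp
    rcases le_total t t₂ with h | h
    · exact hlift t ⟨ht.1, h⟩ p hp
    · rw [hheight t ⟨h, by linarith [ht.2]⟩]
      have hlowest : A ≤ ⟪ν, F.R t₂ p - e₁⟫ := hmin hp
      linarith [ht.2]
  have hendpoint : ∀ t ∈ Ico 0 T, ∀ p ∈ X₀, F.R t p ≠ e₁ ∧ F.R t p ≠ e₂ := by
    intro t ht p hp
    rcases lt_or_ge t (t₂ + A) with h | h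
    · have hpos := hinside t ⟨ht.1, h⟩ p hp
      refine ⟨?_, ?_⟩ <;> rintro hq <;> rw [hq] at hpos
      · simp at hpos
      · exact hpos.ne' hνe
    · have hab := habscissa t ⟨by linarith, ht.2.le⟩ p
      obtain ⟨h0, h1⟩ := hstrip p hp
      refine ⟨?_, ?_⟩ <;> rintro hq <;> rw [hq] at hab
      · simp [← hab] at h0
      · rw [real_inner_self_eq_norm_sq] at hab
        exact h1.ne hab.symm
  refine ⟨⟨t₂ + A, t₂ + A, by linarith, le_rfl, hAT, ?_, ?_, ?_⟩, ?_⟩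
  · rintro t ⟨h₁, h₂⟩
    obtain rfl : t = t₂ + A := le_antisymm h₂ h₁
    refine ⟨_, mem_image_of_mem _ hp₀, mem_seg_sdiff_of_inner_eq_zero hν0 hνe ?_ ?_⟩
    · rw [hheight _ ⟨by linarith, hAT⟩]; ring
    · rw [habscissa _ ⟨by linarith, hAT⟩]; exact hstrip p₀ hp₀
  · rintro t ht _ ⟨p, hp, rfl⟩
    rw [hP]
    exact (hinside t ht p hp).le
  · rintro t ht
    exact ⟨fun ⟨p, hp, hq⟩ => (hendpoint t ht p hp).1 hq,
      fun ⟨p, hp, hq⟩ => (hendpoint t ht p hp).2 hq⟩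
  · rintro _ ⟨p, hp, rfl⟩
    rw [hP, mem_compl_iff, mem_ofPred_eq, not_le, hheight T ⟨by linarith, le_rfl⟩]
    linarith [hdeep p hp]

end TransFam

lemma abs_inner_rot_le_norm {ν : Pt} (hν : ‖ν‖ = 1) (β : ℝ) (x : Pt) :
    |⟪ν, rot β x⟫| ≤ ‖x‖ := by
  simpa [hν, norm_rot] using abs_real_inner_le_norm ν (rot β x)

lemma exists_rot_add_inner_mem_Ioo {X₀ : Set Pt} (hX₀ : IsCompact X₀) {e₁ e₂ ν : Pt}
    (he : e₁ ≠ e₂) (hν : ‖ν‖ = 1) (hνe : ⟪ν, e₂ - e₁⟫ = 0) (hW : width X₀ < ‖e₂ - e₁‖)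
    (c : Pt) (η : ℝ) :
    ∃ α q, ⟪ν, q - e₁⟫ = η ∧
      ∀ p ∈ X₀, ⟪e₂ - e₁, rot α (p - c) + q - e₁⟫ ∈ Ioo 0 (‖e₂ - e₁‖ ^ 2) := by
  set L := ‖e₂ - e₁‖
  have hL : 0 < L := norm_pos_iff.mpr (sub_ne_zero.mpr he.symm)
  set d := L⁻¹ • (e₂ - e₁)
  have hd : ‖d‖ = 1 := by rw [norm_smul, norm_inv, norm_norm, inv_mul_cancel₀ hL.ne']
  have hdd : ⟪d, d⟫ = 1 := by rw [real_inner_self_eq_norm_sq, hd, one_pow]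
  have hdν : ⟪d, ν⟫ = 0 := by rw [real_inner_smul_left, real_inner_comm, hνe, mul_zero]
  have hΔ : e₂ - e₁ = L • d := by rw [smul_inv_smul₀ hL.ne']
  clear_value d
  obtain ⟨u, hu, m, hm⟩ := exists_abs_inner_sub_lt_of_width_lt hX₀ hW
  obtain ⟨α, hα⟩ := exists_rot_eq hu hd
  set s := L / 2 + ⟪u, c⟫ - m
  refine ⟨α, e₁ + s • d + η • ν, ?_, fun p hp => ?_⟩
  · rw [add_assoc, add_sub_cancel_left, inner_add_right, real_inner_smul_right,
      real_inner_smul_right, real_inner_comm, hdν, real_inner_self_eq_norm_sq, hν]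
    ring
  have habscissa :
      ⟪e₂ - e₁, rot α (p - c) + (e₁ + s • d + η • ν) - e₁⟫ = L * (⟪u, p⟫ - m + L / 2) := by
    rw [hΔ, real_inner_smul_left, add_sub_assoc, add_assoc, add_sub_cancel_left, inner_add_right,
      inner_add_right, ← hα, inner_rot_rot, real_inner_smul_right, real_inner_smul_right, hα, hdd,
      hdν, inner_sub_right]
    ring
  have := abs_sub_lt_iff.mp (hm p hp)
  rw [habscissa, sq]
  exact ⟨mul_pos hL (by linarith), mul_lt_mul_of_pos_left (by linarith) hL⟩

def liftTurnLower (c v w : Pt) (α T : ℝ) : TransFam c T where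
  θ t := α * min (max (t - 1) 0) 1
  trans t := min t 1 • v - max (t - 2) 0 • w
  contθ := by fun_prop
  contTrans := by fun_prop

section liftTurnLower

variable {c v w p : Pt} {α T t : ℝ}

lemma liftTurnLower_R_of_le_one (ht : t ≤ 1) :
    (liftTurnLower c v w α T).R t p = p + t • v := by
  simp only [TransFam.R, liftTurnLower, max_eq_right (sub_nonpos.mpr ht),
    max_eq_right (by linarith : t - 2 ≤ 0), min_eq_left ht, min_eq_left zero_le_one, mul_zero,
    rot_zero, zero_smul, sub_zero]
  abel

lemma liftTurnLower_R_of_one_le_of_le_two (ht₁ : 1 ≤ t) (ht₂ : t ≤ 2) :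
    (liftTurnLower c v w α T).R t p = rot (α * (t - 1)) (p - c) + v + c := by
  simp only [TransFam.R, liftTurnLower, max_eq_left (sub_nonneg.mpr ht₁),
    max_eq_right (sub_nonpos.mpr ht₂), min_eq_left (by linarith : t - 1 ≤ 1), min_eq_right ht₁,
    one_smul, zero_smul, sub_zero]

lemma liftTurnLower_R_of_two_le (ht : 2 ≤ t) :
    (liftTurnLower c v w α T).R t p = (liftTurnLower c v w α T).R 2 p - (t - 2) • w := by
  have hturned : min (max (t - 1) 0) 1 = 1 := by
    rw [max_eq_left (by linarith), min_eq_right (by linarith)]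
  simp only [TransFam.R, liftTurnLower, hturned, max_eq_left (sub_nonneg.mpr ht),
    min_eq_right (by linarith : 1 ≤ t)]
  norm_num
  abel

lemma inner_liftTurnLower_R_sub_pos {X₀ : Set Pt} {e₁ ν : Pt} {ρ : ℝ} (hν : ‖ν‖ = 1)
    (hc : c ∈ X₀) (hρ : ∀ p ∈ X₀, ‖p - c‖ ≤ ρ) (hX₀ : ∀ p ∈ X₀, 0 < ⟪ν, p - e₁⟫) (hv : ρ ≤ ⟪ν, v⟫) :
    ∀ t ∈ Icc 0 2, ∀ p ∈ X₀, 0 < ⟪ν, (liftTurnLower c v w α T).R t p - e₁⟫ := by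
  rintro t ⟨ht₀, ht₂⟩ p hp
  rcases le_total t 1 with ht₁ | ht₁
  · rw [liftTurnLower_R_of_le_one ht₁, add_sub_right_comm, inner_add_right,
      real_inner_smul_right]
    have hρ₀ : 0 ≤ ρ := by simpa using hρ c hc
    nlinarith [hX₀ p hp]
  · rw [liftTurnLower_R_of_one_le_of_le_two ht₁ ht₂, add_sub_assoc, inner_add_right,
      inner_add_right]
    have hturn := neg_le_of_abs_le
      ((abs_inner_rot_le_norm hν (α * (t - 1)) (p - c)).trans (hρ p hp))
    linarith [hX₀ c hc]

end liftTurnLower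

theorem passes_fully_through_of_width_lt_general
    (X₀ : Set Pt) (c : Pt) (hc : c ∈ X₀)
    (hX₀c : IsCompact X₀)
    (e₁ e₂ : Pt) (he : e₁ ≠ e₂)
    (hsub : X₀ ⊆ interior (halfPlane e₁ e₂ c))
    (hW : width X₀ < ‖e₂ - e₁‖) :
    ∃ T : ℝ, 0 < T ∧ ∃ F : TransFam c T,
      AttemptsPass F X₀ e₁ e₂ ∧ F.R T '' X₀ ⊆ (halfPlane e₁ e₂ c)ᶜ := by
  obtain ⟨ν, hν, hνe, hP⟩ := exists_unit_normal_halfPlane he c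
  have hX₀ν : ∀ p ∈ X₀, 0 < ⟪ν, p - e₁⟫ := fun p hp =>
    inner_sub_pos_of_mem_interior (norm_ne_zero_iff.mp (hν ▸ one_ne_zero)) (hP ▸ hsub hp)
  obtain ⟨ρ, hρ⟩ : ∃ ρ, ∀ p ∈ X₀, ‖p - c‖ ≤ ρ := by
    obtain ⟨ρ, hρ⟩ := hX₀c.isBounded.subset_closedBall c
    exact ⟨ρ, fun p hp => by simpa [dist_eq_norm] using hρ hp⟩
  -- `c` is lifted by the radius `ρ` of `X₀` about `c`, so turning keeps `X₀` off `ℓ_I`.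
  set η := ρ + ⟪ν, c - e₁⟫
  obtain ⟨α, q, hq, hstrip⟩ := exists_rot_add_inner_mem_Ioo hX₀c he hν hνe hW c η
  set T := 2 + (η + ρ + 1)
  set F := liftTurnLower c (q - c) ν α T
  have hturned : ∀ p, F.R 2 p = rot α (p - c) + q := fun p => by
    rw [liftTurnLower_R_of_one_le_of_le_two one_le_two le_rfl]; norm_num [add_assoc]
  have hρ₀ : 0 ≤ ρ := by simpa using hρ c hc
  refine ⟨T, by linarith [hX₀ν c hc], F, F.passes_of_lowering hX₀c ⟨c, hc⟩ hν hνe hP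
    zero_le_two (inner_liftTurnLower_R_sub_pos hν hc hρ hX₀ν ?_)
    (fun t ht p => liftTurnLower_R_of_two_le ht.1) (fun p hp => hturned p ▸ hstrip p hp)
    fun p hp => ?_⟩
  · rw [← sub_sub_sub_cancel_right q c e₁, inner_sub_right, hq]; linarith
  · rw [hturned, add_sub_assoc, inner_add_right, hq]
    linarith [le_of_abs_le ((abs_inner_rot_le_norm hν α (p - c)).trans (hρ p hp))]

/-- If the width of `X₀` is strictly less than the length of the segment `[e₁, e₂]`
(of positive length, whose line is disjoint from `X₀`, with `X₀` in the interior of the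
half-plane `P_I`), then some transformation family passes `X₀` fully through the
segment. -/
theorem passes_fully_through_of_width_lt
    (X₀ : Set Pt) (c : Pt) (hc : c ∈ X₀)
    (hX₀c : IsCompact X₀) (hX₀conv : Convex ℝ X₀) (hX₀int : (interior X₀).Nonempty)
    (e₁ e₂ : Pt) (he : e₁ ≠ e₂)
    (hdisj : lineThrough e₁ e₂ ∩ X₀ = ∅)
    (hsub : X₀ ⊆ interior (halfPlane e₁ e₂ c))
    (hW : width X₀ < ‖e₂ - e₁‖) :
    ∃ T : ℝ, 0 < T ∧ ∃ F : TransFam c T,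
      AttemptsPass F X₀ e₁ e₂ ∧ F.R T '' X₀ ⊆ (halfPlane e₁ e₂ c)ᶜ :=
  passes_fully_through_of_width_lt_general X₀ c hc hX₀c e₁ e₂ he hsub hW

end
end
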